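/- arXiv:1103.1369 — 3 statements merged into one kernel-verified Lean document; each statement's English description precedes it below -/
import Mathlib

section
/- Let d > 1 and let U_1, ..., U_d be pairwise commuting isometries on a Hilbert space X such that the block row [U_1 ... U_d] : X^d → X is isometric as an operator (equivalently, the ranges of U_1, ..., U_d are pairwise orthogonal). Then X = {0}. -/
/-- pairwise commuting isometries with pairwise orthogonal ranges,
forming an isometric row, force the Hilbert space to be zero when `d > 1`. -/
theorem commuting_row_isometries_trivial
    {X : Type*} [NormedAddCommGroup X] [InnerProductSpace ℂ X] [CompleteSpace X]
    {d : ℕ} (hd : 1 < d) (U : Fin d → X →L[ℂ] X)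
    (hiso : ∀ j, (ContinuousLinearMap.adjoint (U j)).comp (U j) = 1)
    (hcomm : ∀ i j, (U i).comp (U j) = (U j).comp (U i))
    (horth : ∀ i j, i ≠ j → (ContinuousLinearMap.adjoint (U i)).comp (U j) = 0) :
    ∀ x : X, x = 0 := by
  intro x
  set i : Fin d := ⟨0, Nat.lt_of_lt_of_le Nat.one_pos hd.le⟩ with hi
  set j : Fin d := ⟨1, hd⟩ with hj
  have hne : i ≠ j := by simp [hi, hj, Fin.ext_iff]
  have hU1 : U j = 0 := by
    have h1 : (ContinuousLinearMap.adjoint (U i)).comp ((U i).comp (U j)) = U j := by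
      rw [← ContinuousLinearMap.comp_assoc, hiso i, ContinuousLinearMap.one_def,
        ContinuousLinearMap.id_comp]
    have h2 : (ContinuousLinearMap.adjoint (U i)).comp ((U i).comp (U j)) = 0 := by
      rw [hcomm i j, ← ContinuousLinearMap.comp_assoc, horth i j hne,
        ContinuousLinearMap.zero_comp]
    rw [← h1, h2]
  have h0 : (1 : X →L[ℂ] X) = 0 := by
    rw [← hiso j, hU1, ContinuousLinearMap.comp_zero]
  calc x = (1 : X →L[ℂ] X) x := rfl
    _ = (0 : X →L[ℂ] X) x := by rw [h0]
    _ = 0 := rfl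
end

section
/- Let U = [[A, B],[C, D]] : H ⊕ U → K ⊕ Y be a contraction between Hilbert space direct sums such that the second column is isometric, i.e., B*B + D*D = I_U. Then the columns are orthogonal: A*B + C*D = 0. -/
open scoped InnerProductSpace

/-- if the block operator `[[A,B],[C,D]]` is a contraction and its
second column is isometric (`B*B + D*D = I`), then the columns are orthogonal:
`A*B + C*D = 0`. -/
theorem contraction_isometric_column_orthogonal
    {H G K Y : Type*}
    [NormedAddCommGroup H] [InnerProductSpace ℂ H] [CompleteSpace H]
    [NormedAddCommGroup G] [InnerProductSpace ℂ G] [CompleteSpace G]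
    [NormedAddCommGroup K] [InnerProductSpace ℂ K] [CompleteSpace K]
    [NormedAddCommGroup Y] [InnerProductSpace ℂ Y] [CompleteSpace Y]
    (A : H →L[ℂ] K) (B : G →L[ℂ] K) (C : H →L[ℂ] Y) (D : G →L[ℂ] Y)
    (hcontr : ∀ (h : H) (u : G),
      ‖A h + B u‖ ^ 2 + ‖C h + D u‖ ^ 2 ≤ ‖h‖ ^ 2 + ‖u‖ ^ 2)
    (hcol : (ContinuousLinearMap.adjoint B).comp B
        + (ContinuousLinearMap.adjoint D).comp D = 1) :
    (ContinuousLinearMap.adjoint A).comp B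
      + (ContinuousLinearMap.adjoint C).comp D = 0 := by
  ext u
  simp only [ContinuousLinearMap.add_apply, ContinuousLinearMap.comp_apply,
    ContinuousLinearMap.zero_apply]
  set w : H := ContinuousLinearMap.adjoint A (B u) + ContinuousLinearMap.adjoint C (D u)
    with hw
  -- second column isometric pointwise
  have hcolu : ContinuousLinearMap.adjoint B (B u) + ContinuousLinearMap.adjoint D (D u) = u := by
    have := congrFun (congrArg DFunLike.coe hcol) u
    simpa using this
  have hnorm_u : ‖B u‖ ^ 2 + ‖D u‖ ^ 2 = ‖u‖ ^ 2 := by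
    have h1 : (⟪u, ContinuousLinearMap.adjoint B (B u) + ContinuousLinearMap.adjoint D (D u)⟫_ℂ)
        = ⟪u, u⟫_ℂ := by rw [hcolu]
    rw [inner_add_right, ContinuousLinearMap.adjoint_inner_right,
      ContinuousLinearMap.adjoint_inner_right, inner_self_eq_norm_sq_to_K,
      inner_self_eq_norm_sq_to_K, inner_self_eq_norm_sq_to_K] at h1
    exact_mod_cast h1
  -- cross term
  have hcross : Complex.re (⟪A w, B u⟫_ℂ) + Complex.re (⟪C w, D u⟫_ℂ) = ‖w‖ ^ 2 := by
    have h1 : ⟪w, w⟫_ℂ = ⟪A w, B u⟫_ℂ + ⟪C w, D u⟫_ℂ := by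
      rw [hw, inner_add_right, ContinuousLinearMap.adjoint_inner_right,
        ContinuousLinearMap.adjoint_inner_right]
    rw [inner_self_eq_norm_sq_to_K] at h1
    have := congrArg Complex.re h1
    simpa [Complex.add_re, ← Complex.ofReal_pow, Complex.ofReal_re] using this.symm
  have key := hcontr w u
  rw [norm_add_sq (𝕜 := ℂ), norm_add_sq (𝕜 := ℂ)] at key
  simp only [RCLike.re_to_complex] at key
  have hw0 : ‖w‖ ^ 2 ≤ 0 := by nlinarith [sq_nonneg ‖A w‖, sq_nonneg ‖C w‖]
  have : ‖w‖ = 0 := by nlinarith [sq_nonneg ‖w‖, norm_nonneg w]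
  exact norm_eq_zero.mp this
end

section
/- Suppose S(z) = D + C (I - Z(z)A)^{-1} Z(z) B where Z(z) : X^d → X is the row operator with entries z_j I_X and where the colligation U = [[A, B],[C, D]] : X ⊕ U → X^d ⊕ Y is coisometric (U U* = I). Then for all z, ζ in the open unit ball B^d of ℂ^d: I_Y - S(z) S(ζ)* = (1 - ⟨z, ζ⟩) · C (I - Z(z)A)^{-1} (I - A* Z(ζ)*)^{-1} C*, where ⟨z, ζ⟩ = Σ_j z_j conj(ζ_j). -/
open scoped ENNReal
set_option synthInstance.maxHeartbeats 400000
set_option maxHeartbeats 1000000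

instance PiLp.instCompleteSpace' {p : ℝ≥0∞} {ι : Type*} {β : ι → Type*}
    [∀ i, UniformSpace (β i)] [∀ i, CompleteSpace (β i)] : CompleteSpace (PiLp p β) :=
  (PiLp.uniformEquiv p β).completeSpace_iff.2 (Pi.complete β)

/-- The row operator `Z(z) = [z₁ I_X, …, z_d I_X] : X^d → X`. -/
noncomputable def rowOp {X : Type*} [NormedAddCommGroup X] [NormedSpace ℂ X]
    {d : ℕ} (z : EuclideanSpace ℂ (Fin d)) : PiLp 2 (fun _ : Fin d => X) →L[ℂ] X :=
  ∑ j : Fin d, z j • ((ContinuousLinearMap.proj j : (∀ _ : Fin d, X) →L[ℂ] X).comp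
      (PiLp.continuousLinearEquiv 2 ℂ (fun _ : Fin d => X)).toContinuousLinearMap)

/-! Write `Z = Z(z)`, `W = Z(ζ)`, `E = (1 - ZA)⁻¹` and `F = (1 - A*W*)⁻¹ = ((1 - WA)⁻¹)*`, so that
`E = 1 + EZA`, `F = 1 + A*W*F` and `ZW* = ⟨z, ζ⟩`. Expanding `S(z)S(ζ)*` and using the four block
identities of `UU* = I` gives `1 - S(z)S(ζ)* = C(1 + EZA)(1 + A*W*F)C* - ⟨z, ζ⟩ CEFC*`, which is
`(1 - ⟨z, ζ⟩) CEFC*`. The inverses exist because `‖A‖ ≤ 1` (from `AA* + BB* = 1`) and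
`‖Z(z)‖² = ‖Z(z)Z(z)*‖ = ‖z‖²` by the C*-identity. -/

open ContinuousLinearMap

section Colligation

variable {𝕜 X P G Y : Type*} [RCLike 𝕜]
  [NormedAddCommGroup X] [InnerProductSpace 𝕜 X] [CompleteSpace X]
  [NormedAddCommGroup P] [InnerProductSpace 𝕜 P] [CompleteSpace P]
  [NormedAddCommGroup G] [InnerProductSpace 𝕜 G] [CompleteSpace G]
  [NormedAddCommGroup Y] [InnerProductSpace 𝕜 Y] [CompleteSpace Y]

theorem ContinuousLinearMap.norm_le_one_of_comp_adjoint_add_comp_adjoint_eq_one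
    (A : X →L[𝕜] P) (B : G →L[𝕜] P) (h : A ∘L adjoint A + B ∘L adjoint B = 1) : ‖A‖ ≤ 1 := by
  rw [← adjoint.norm_map A]
  refine opNorm_le_bound _ zero_le_one fun y => ?_
  have hsum : ‖adjoint A y‖ ^ 2 + ‖adjoint B y‖ ^ 2 = ‖y‖ ^ 2 := by
    rw [apply_norm_sq_eq_inner_adjoint_left, apply_norm_sq_eq_inner_adjoint_left,
      adjoint_adjoint, adjoint_adjoint, ← map_add, ← inner_add_left, ← add_apply, h,
      one_apply_eq_self, inner_self_eq_norm_sq]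
  nlinarith [norm_nonneg (adjoint A y), norm_nonneg y, sq_nonneg ‖adjoint B y‖]

theorem one_sub_transfer_comp_adjoint_transfer
    {A : X →L[𝕜] P} {B : G →L[𝕜] P} {C : X →L[𝕜] Y} {D : G →L[𝕜] Y}
    (hco1 : A ∘L adjoint A + B ∘L adjoint B = 1) (hco2 : A ∘L adjoint C + B ∘L adjoint D = 0)
    (hco3 : C ∘L adjoint A + D ∘L adjoint B = 0) (hco4 : C ∘L adjoint C + D ∘L adjoint D = 1)
    {Z W : P →L[𝕜] X} {s : 𝕜} (hZW : Z ∘L adjoint W = s • 1)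
    {E E' : X →L[𝕜] X} (hE : E ∘L (1 - Z ∘L A) = 1) (hE' : E' ∘L (1 - W ∘L A) = 1) :
    (1 : Y →L[𝕜] Y) - (D + ((C.comp E).comp Z).comp B).comp
        (adjoint (D + ((C.comp E').comp W).comp B))
      = (1 - s) • (C.comp (E.comp ((adjoint E').comp (adjoint C)))) := by
  have hBB : ∀ u, B (adjoint B u) = u - A (adjoint A u) := fun u =>
    eq_sub_of_add_eq' (by simpa using DFunLike.congr_fun hco1 u)
  have hBD : ∀ g, B (adjoint D g) = -A (adjoint C g) := fun g =>
    eq_neg_of_add_eq_zero_right (by simpa using DFunLike.congr_fun hco2 g)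
  have hDB : ∀ u, D (adjoint B u) = -C (adjoint A u) := fun u =>
    eq_neg_of_add_eq_zero_right (by simpa using DFunLike.congr_fun hco3 u)
  have hDD : ∀ g, D (adjoint D g) = g - C (adjoint C g) := fun g =>
    eq_sub_of_add_eq' (by simpa using DFunLike.congr_fun hco4 g)
  have hZWx : ∀ x, Z (adjoint W x) = s • x := fun x => by simpa using DFunLike.congr_fun hZW x
  have hEx : ∀ x, E x = x + E (Z (A x)) := fun x => by
    have h := DFunLike.congr_fun hE x
    simp only [comp_apply, sub_apply, map_sub, one_apply_eq_self] at h
    exact sub_eq_iff_eq_add.mp h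
  have hF : ∀ x, adjoint E' x = x + adjoint A (adjoint W (adjoint E' x)) := fun x => by
    have h := DFunLike.congr_fun (congrArg adjoint hE') x
    simp only [adjoint_comp, map_sub, adjoint_one, comp_apply, sub_apply, one_apply_eq_self] at h
    exact sub_eq_iff_eq_add.mp h
  ext g
  have hAu : adjoint A (adjoint W (adjoint E' (adjoint C g)))
      = adjoint E' (adjoint C g) - adjoint C g := eq_sub_of_add_eq' (hF _).symm
  simp only [map_add, adjoint_comp, sub_apply, add_apply, comp_apply, smul_apply,
    one_apply_eq_self]
  rw [hBB, hBD, hDB, hDD, hAu]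
  simp only [map_sub, map_neg, hZWx, map_smul]
  rw [hEx (adjoint E' (adjoint C g))]
  simp only [map_add]
  module

end Colligation

section RowOp

variable {X : Type*} [NormedAddCommGroup X] [InnerProductSpace ℂ X] {d : ℕ}

theorem rowOp_apply (z : EuclideanSpace ℂ (Fin d)) (x : PiLp 2 (fun _ : Fin d => X)) :
    rowOp z x = ∑ j, z j • x j := by
  simp [rowOp, sum_apply]

variable [CompleteSpace X]

theorem adjoint_rowOp_apply (ζ : EuclideanSpace ℂ (Fin d)) (x : X) :
    adjoint (rowOp ζ) x = WithLp.toLp 2 (fun j => starRingEnd ℂ (ζ j) • x) := by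
  refine ext_inner_right ℂ fun v => ?_
  simp [adjoint_inner_left, rowOp_apply, PiLp.inner_apply, inner_sum, inner_smul_left,
    inner_smul_right]

theorem rowOp_comp_adjoint_rowOp (z ζ : EuclideanSpace ℂ (Fin d)) :
    rowOp z ∘L adjoint (rowOp ζ) = inner ℂ ζ z • (1 : X →L[ℂ] X) := by
  ext x
  simp [rowOp_apply, adjoint_rowOp_apply, PiLp.inner_apply, smul_smul, Finset.sum_smul]

theorem norm_rowOp_le (z : EuclideanSpace ℂ (Fin d)) : ‖rowOp (X := X) z‖ ≤ ‖z‖ := by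
  have h : ‖rowOp (X := X) z‖ * ‖rowOp (X := X) z‖ ≤ ‖z‖ * ‖z‖ :=
    calc ‖rowOp z‖ * ‖rowOp z‖ = ‖rowOp (X := X) z ∘L adjoint (rowOp z)‖ := by
          rw [← adjoint.norm_map (rowOp (X := X) z), ← norm_adjoint_comp_self, adjoint_adjoint]
      _ = ‖inner ℂ z z • (1 : X →L[ℂ] X)‖ := by rw [rowOp_comp_adjoint_rowOp]
      _ ≤ ‖z‖ * ‖z‖ * ‖(1 : X →L[ℂ] X)‖ := by
          rw [inner_self_eq_norm_sq_to_K, ← sq]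
          exact (norm_smul_le _ _).trans_eq (by simp)
      _ ≤ ‖z‖ * ‖z‖ := mul_le_of_le_one_right (by positivity) norm_id_le
  nlinarith [norm_nonneg (rowOp (X := X) z), norm_nonneg z]

theorem isUnit_one_sub_rowOp_comp {A : X →L[ℂ] PiLp 2 (fun _ : Fin d => X)} (hA : ‖A‖ ≤ 1)
    {z : EuclideanSpace ℂ (Fin d)} (hz : ‖z‖ < 1) : IsUnit (1 - rowOp z ∘L A) :=
  isUnit_one_sub_of_norm_lt_one <| (opNorm_comp_le _ _).trans_lt <|
    (mul_le_of_le_one_right (norm_nonneg _) hA).trans_lt ((norm_rowOp_le z).trans_lt hz)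

end RowOp

theorem coisometric_realization_kernel_identity_general
    {X G Y : Type*}
    [NormedAddCommGroup X] [InnerProductSpace ℂ X] [CompleteSpace X]
    [NormedAddCommGroup G] [InnerProductSpace ℂ G] [CompleteSpace G]
    [NormedAddCommGroup Y] [InnerProductSpace ℂ Y] [CompleteSpace Y]
    {d : ℕ}
    (A : X →L[ℂ] PiLp 2 (fun _ : Fin d => X))
    (B : G →L[ℂ] PiLp 2 (fun _ : Fin d => X))
    (C : X →L[ℂ] Y) (D : G →L[ℂ] Y)
    (hco1 : A.comp (ContinuousLinearMap.adjoint A)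
        + B.comp (ContinuousLinearMap.adjoint B) = 1)
    (hco2 : A.comp (ContinuousLinearMap.adjoint C)
        + B.comp (ContinuousLinearMap.adjoint D) = 0)
    (hco3 : C.comp (ContinuousLinearMap.adjoint A)
        + D.comp (ContinuousLinearMap.adjoint B) = 0)
    (hco4 : C.comp (ContinuousLinearMap.adjoint C)
        + D.comp (ContinuousLinearMap.adjoint D) = 1)
    (S : EuclideanSpace ℂ (Fin d) → G →L[ℂ] Y)
    (hS : ∀ z : EuclideanSpace ℂ (Fin d),
      S z = D + ((C.comp (Ring.inverse (1 - (rowOp z).comp A))).comp (rowOp z)).comp B) :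
    ∀ z ζ : EuclideanSpace ℂ (Fin d), ‖z‖ < 1 → ‖ζ‖ < 1 →
      (1 : Y →L[ℂ] Y) - (S z).comp (ContinuousLinearMap.adjoint (S ζ))
      = (1 - ∑ j, z j * (starRingEnd ℂ) (ζ j)) •
          ((C.comp (Ring.inverse (1 - (rowOp z).comp A))).comp
            ((Ring.inverse ((1 : X →L[ℂ] X) - (ContinuousLinearMap.adjoint A).comp
              (ContinuousLinearMap.adjoint (rowOp ζ)))).comp
              (ContinuousLinearMap.adjoint C))) := by
  intro z ζ hz hζ
  have hA : ‖A‖ ≤ 1 := norm_le_one_of_comp_adjoint_add_comp_adjoint_eq_one A B hco1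
  have hstar : (1 : X →L[ℂ] X) - (adjoint A).comp (adjoint (rowOp ζ))
      = star (1 - (rowOp ζ).comp A) := by
    rw [star_eq_adjoint, map_sub, adjoint_one, adjoint_comp]
  have hinner : ∑ j, z j * starRingEnd ℂ (ζ j) = inner ℂ ζ z := by
    simp [PiLp.inner_apply]
  rw [hS, hS, hstar, Ring.inverse_star, star_eq_adjoint, hinner]
  exact one_sub_transfer_comp_adjoint_transfer hco1 hco2 hco3 hco4 (rowOp_comp_adjoint_rowOp z ζ)
    (Ring.inverse_mul_cancel _ (isUnit_one_sub_rowOp_comp hA hz))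
    (Ring.inverse_mul_cancel _ (isUnit_one_sub_rowOp_comp hA hζ))

/-- for a coisometric colligation `U = [[A,B],[C,D]]` (i.e. `UU* = I`,
expressed componentwise) and `S(z) = D + C(I - Z(z)A)⁻¹Z(z)B`, one has
`I - S(z)S(ζ)* = (1 - ⟨z,ζ⟩) C (I - Z(z)A)⁻¹ (I - A*Z(ζ)*)⁻¹ C*` on the ball. -/
theorem coisometric_realization_kernel_identity
    {X G Y : Type*}
    [NormedAddCommGroup X] [InnerProductSpace ℂ X] [CompleteSpace X]
    [NormedAddCommGroup G] [InnerProductSpace ℂ G] [CompleteSpace G]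
    [NormedAddCommGroup Y] [InnerProductSpace ℂ Y] [CompleteSpace Y]
    {d : ℕ} (hd : 1 ≤ d)
    (A : X →L[ℂ] PiLp 2 (fun _ : Fin d => X))
    (B : G →L[ℂ] PiLp 2 (fun _ : Fin d => X))
    (C : X →L[ℂ] Y) (D : G →L[ℂ] Y)
    (hco1 : A.comp (ContinuousLinearMap.adjoint A)
        + B.comp (ContinuousLinearMap.adjoint B) = 1)
    (hco2 : A.comp (ContinuousLinearMap.adjoint C)
        + B.comp (ContinuousLinearMap.adjoint D) = 0)
    (hco3 : C.comp (ContinuousLinearMap.adjoint A)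
        + D.comp (ContinuousLinearMap.adjoint B) = 0)
    (hco4 : C.comp (ContinuousLinearMap.adjoint C)
        + D.comp (ContinuousLinearMap.adjoint D) = 1)
    (S : EuclideanSpace ℂ (Fin d) → G →L[ℂ] Y)
    (hS : ∀ z : EuclideanSpace ℂ (Fin d),
      S z = D + ((C.comp (Ring.inverse (1 - (rowOp z).comp A))).comp (rowOp z)).comp B) :
    ∀ z ζ : EuclideanSpace ℂ (Fin d), ‖z‖ < 1 → ‖ζ‖ < 1 →
      (1 : Y →L[ℂ] Y) - (S z).comp (ContinuousLinearMap.adjoint (S ζ))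
      = (1 - ∑ j, z j * (starRingEnd ℂ) (ζ j)) •
          ((C.comp (Ring.inverse (1 - (rowOp z).comp A))).comp
            ((Ring.inverse ((1 : X →L[ℂ] X) - (ContinuousLinearMap.adjoint A).comp
              (ContinuousLinearMap.adjoint (rowOp ζ)))).comp
              (ContinuousLinearMap.adjoint C))) :=
  coisometric_realization_kernel_identity_general A B C D hco1 hco2 hco3 hco4 S hS
end
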